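/- Let ∅ ≠ A ⊆ R̃^d be internal and sharply bounded, let (A_ε)_ε be a sharply bounded representative of A, and let u = [(u_ε)_ε] ∈ G̃(A). The following are equivalent: (1) there exists v ∈ G̃(A) with uv = 1 in G̃(A); (2) for every x̃ ∈ A, the point value u(x̃) is invertible in the ring C̃; (3) there exist ε_0 ∈ (0,1) and n ∈ ℕ such that for all ε ≤ ε_0, inf_{x ∈ A_ε + ε^n} |u_ε(x)| ≥ ε^n (where A + r denotes {x : d(x,A) ≤ r}). -/

import Mathlib

open Real Set Metric MeasureTheory Filter

noncomputable section

/-- `P ε` holds for all sufficiently small `ε ∈ (0,1)`. -/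
def EvSmall (P : ℝ → Prop) : Prop :=
  ∃ ε₀ : ℝ, 0 < ε₀ ∧ ε₀ < 1 ∧ ∀ ε : ℝ, 0 < ε → ε ≤ ε₀ → P ε

/-- A net `(u_ε)` with values in a seminormed group is moderate. -/
def Moderate {E : Type*} [SeminormedAddGroup E] (u : ℝ → E) : Prop :=
  ∃ N : ℕ, EvSmall fun ε => ‖u ε‖ ≤ ε ^ (-(N : ℝ))

/-- A net `(u_ε)` is negligible. -/
def Negligible {E : Type*} [SeminormedAddGroup E] (u : ℝ → E) : Prop :=
  ∀ m : ℕ, EvSmall fun ε => ‖u ε‖ ≤ ε ^ (m : ℝ)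

/-- Two nets represent the same generalized point. -/
def EqvNet {E : Type*} [SeminormedAddGroup E] (x y : ℝ → E) : Prop :=
  Negligible fun ε => x ε - y ε

/-- The set of generalized points of `Ẽ` (modelled as the moderate nets). -/
def GenPt (E : Type*) [SeminormedAddGroup E] : Set (ℝ → E) := {x | Moderate x}

/-- `x` is a representative of some generalized point belonging to `A`. -/
def IsReprOfPointOf {E : Type*} [SeminormedAddGroup E] (A : Set (ℝ → E)) (x : ℝ → E) : Prop :=
  Moderate x ∧ ∃ a ∈ A, EqvNet x a

/-- The sharp norm `e^{-v(x)}` of a (moderate) net. -/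
noncomputable def sharpNorm {E : Type*} [SeminormedAddGroup E] (x : ℝ → E) : ℝ :=
  sInf {r : ℝ | ∃ b : ℝ, r = Real.exp (-b) ∧ EvSmall fun ε => ‖x ε‖ ≤ ε ^ b}

/-- `A` is open for the sharp topology (as a set of generalized points). -/
def SharpOpen {E : Type*} [SeminormedAddGroup E] (A : Set (ℝ → E)) : Prop :=
  (∀ x ∈ A, Moderate x) ∧
  ∀ x ∈ A, ∃ r > 0, ∀ y : ℝ → E, Moderate y →
    sharpNorm (fun ε => y ε - x ε) < r → y ∈ A

/-- `B` is a sharp neighbourhood of `A`. -/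
def IsSharpNbhdOf {E : Type*} [SeminormedAddGroup E] (B A : Set (ℝ → E)) : Prop :=
  A ⊆ B ∧ ∀ x ∈ A, ∃ r > 0, ∀ y : ℝ → E, Moderate y →
    sharpNorm (fun ε => y ε - x ε) < r → y ∈ B

/-- The internal set with representative `(Aε)`. -/
def InternalSet {E : Type*} [SeminormedAddGroup E] (Aε : ℝ → Set E) : Set (ℝ → E) :=
  {x | Moderate x ∧ ∃ y : ℝ → E, EqvNet x y ∧ EvSmall fun ε => y ε ∈ Aε ε}

/-- `(Aε)` is a sharply bounded representative. -/
def SharplyBddRep {E : Type*} [SeminormedAddGroup E] (Aε : ℝ → Set E) : Prop :=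
  ∃ M : ℕ, EvSmall fun ε => ∀ x ∈ Aε ε, ‖x‖ ≤ ε ^ (-(M : ℝ))

/-- A set of generalized points is sharply bounded. -/
def SharplyBddSet {E : Type*} [SeminormedAddGroup E] (A : Set (ℝ → E)) : Prop :=
  ∃ C : ℝ, ∀ x ∈ A, sharpNorm x ≤ C

/-- The interleaved closure of a set of generalized points. -/
def interleaved {E : Type*} [SeminormedAddGroup E] (A : Set (ℝ → E)) : Set (ℝ → E) :=
  {x | ∃ (m : ℕ) (S : Fin m → Set ℝ) (y : Fin m → ℝ → E),
    (∀ ε ∈ Set.Ioo (0:ℝ) 1, ∃! j, ε ∈ S j) ∧ (∀ j, y j ∈ A) ∧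
    ∀ ε ∈ Set.Ioo (0:ℝ) 1, ∀ j, ε ∈ S j → x ε = y j ε}

/-- A net of smooth functions (smooth for each ε ∈ (0,1)). -/
def SmoothNet {V : Type*} [NormedAddCommGroup V] [NormedSpace ℝ V] (u : ℝ → V → ℂ) : Prop :=
  ∀ ε : ℝ, 0 < ε → ε < 1 → ContDiff ℝ (⊤ : ℕ∞) (u ε)

/-- The nets belonging to `E_M(A)` : all derivatives are moderate along the points of `A`. -/
def EMod {V : Type*} [NormedAddCommGroup V] [NormedSpace ℝ V]
    (A : Set (ℝ → V)) (u : ℝ → V → ℂ) : Prop :=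
  SmoothNet u ∧ ∀ (n : ℕ) (x : ℝ → V), IsReprOfPointOf A x →
    Moderate fun ε => iteratedFDeriv ℝ n (u ε) (x ε)

/-- The nets belonging to `N(A)` : all derivatives are negligible along the points of `A`. -/
def NNeg {V : Type*} [NormedAddCommGroup V] [NormedSpace ℝ V]
    (A : Set (ℝ → V)) (u : ℝ → V → ℂ) : Prop :=
  SmoothNet u ∧ ∀ (n : ℕ) (x : ℝ → V), IsReprOfPointOf A x →
    Negligible fun ε => iteratedFDeriv ℝ n (u ε) (x ε)

/-- `u` and `v` define the same element of `G̃(A)`. -/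
def GEq {V : Type*} [NormedAddCommGroup V] [NormedSpace ℝ V]
    (A : Set (ℝ → V)) (u v : ℝ → V → ℂ) : Prop :=
  NNeg A fun ε z => u ε z - v ε z

/-- `x̃ ≤ ỹ` in `R̃` (for the given representatives). -/
def RleNet (x y : ℝ → ℝ) : Prop := ∀ m : ℕ, EvSmall fun ε => x ε ≤ y ε + ε ^ (m : ℝ)

/-- `x̃ ≫ 0` in `R̃`. -/
def StrPosNet (x : ℝ → ℝ) : Prop := ∃ m : ℕ, EvSmall fun ε => ε ^ (m : ℝ) ≤ x ε

/-- `x̃ ≪ ỹ` in `R̃`. -/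
def RltlNet (x y : ℝ → ℝ) : Prop := StrPosNet fun ε => y ε - x ε

/-- The operator `∂̄ = ½(∂ₓ + i ∂_y)` on smooth functions `ℂ → ℂ`. -/
def dbar (u : ℂ → ℂ) (z : ℂ) : ℂ :=
  (fderiv ℝ u z 1 + Complex.I * fderiv ℝ u z Complex.I) / 2

/-- The iterated derivative `D^k u = ∂ₓ^k u`. -/
def Dpow : ℕ → (ℂ → ℂ) → ℂ → ℂ
  | 0, u => u
  | (k+1), u => Dpow k fun z => fderiv ℝ u z 1

/-- `u ∈ G̃_H(A)` : generalized holomorphic functions on `A ⊆ C̃`. -/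
def GHol (A : Set (ℝ → ℂ)) (u : ℝ → ℂ → ℂ) : Prop :=
  EMod A u ∧ NNeg A fun ε => dbar (u ε)

/-- A continuous, piecewise `C¹` function on `[0,1]` (with its partition). -/
structure PwC1Path where
  toFun : ℝ → ℂ
  n : ℕ
  pt : Fin (n + 1) → ℝ
  mono : Monotone pt
  first : pt 0 = 0
  last : pt (Fin.last n) = 1
  cont : ContinuousOn toFun (Set.Icc 0 1)
  piece : ∀ i : Fin n, ContDiffOn ℝ 1 toFun (Set.Icc (pt i.castSucc) (pt i.succ))

/-- A net of piecewise `C¹` paths which is moderate for the `C¹_pw` norm. -/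
def PathModerate (γ : ℝ → PwC1Path) : Prop :=
  (∃ N : ℕ, EvSmall fun ε => ∀ t ∈ Set.Icc (0:ℝ) 1, ‖(γ ε).toFun t‖ ≤ ε ^ (-(N:ℝ))) ∧
  (∃ N : ℕ, EvSmall fun ε => ∀ᵐ t ∂(volume.restrict (Set.Icc (0:ℝ) 1)),
      ‖deriv (γ ε).toFun t‖ ≤ ε ^ (-(N:ℝ)))

/-- Two nets of paths represent the same generalized path
(their difference is negligible for the `C¹_pw` norm). -/
def PathEqv (γ γ' : ℝ → PwC1Path) : Prop :=
  ∀ m : ℕ, EvSmall fun ε =>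
    (∀ t ∈ Set.Icc (0:ℝ) 1, ‖(γ ε).toFun t - (γ' ε).toFun t‖ ≤ ε ^ (m:ℝ)) ∧
    (∀ᵐ t ∂(volume.restrict (Set.Icc (0:ℝ) 1)),
      ‖deriv (γ ε).toFun t - deriv (γ' ε).toFun t‖ ≤ ε ^ (m:ℝ))

/-- `γ` is a (generalized) path in `A ⊆ C̃`. -/
def PathIn (A : Set (ℝ → ℂ)) (γ : ℝ → PwC1Path) : Prop :=
  PathModerate γ ∧ ∀ t : ℝ → ℝ, (∀ ε, t ε ∈ Set.Icc (0:ℝ) 1) →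
    IsReprOfPointOf A fun ε => (γ ε).toFun (t ε)

/-- The complex path integral `∫_γ u(z) dz` along a piecewise `C¹` path. -/
noncomputable def pathIntegral (γ : PwC1Path) (u : ℂ → ℂ) : ℂ :=
  ∑ i : Fin γ.n, ∫ t in (γ.pt i.castSucc)..(γ.pt i.succ),
    u (γ.toFun t) * derivWithin γ.toFun (Set.Icc (γ.pt i.castSucc) (γ.pt i.succ)) t

/-- The path is closed: `γ(0) = γ(1)` as generalized points. -/
def ClosedPath (γ : ℝ → PwC1Path) : Prop :=
  Negligible fun ε => (γ ε).toFun 1 - (γ ε).toFun 0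

/-- A continuous, piecewise `C¹` function on `[0,1]²` (with its grid partition). -/
structure PwC1Homotopy where
  toFun : ℝ × ℝ → ℂ
  n : ℕ
  pt : Fin (n + 1) → ℝ
  mono : Monotone pt
  first : pt 0 = 0
  last : pt (Fin.last n) = 1
  cont : ContinuousOn toFun (Set.Icc 0 1 ×ˢ Set.Icc 0 1)
  piece : ∀ i j : Fin n, ContDiffOn ℝ 1 toFun
    (Set.Icc (pt i.castSucc) (pt i.succ) ×ˢ Set.Icc (pt j.castSucc) (pt j.succ))

/-- A moderate net of piecewise `C¹` functions on the square. -/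
def HomotopyModerate (H : ℝ → PwC1Homotopy) : Prop :=
  (∃ N : ℕ, EvSmall fun ε => ∀ p ∈ (Set.Icc (0:ℝ) 1 ×ˢ Set.Icc (0:ℝ) 1),
      ‖(H ε).toFun p‖ ≤ ε ^ (-(N:ℝ))) ∧
  (∃ N : ℕ, EvSmall fun ε =>
      ∀ᵐ p ∂(volume.restrict ((Set.Icc (0:ℝ) 1 ×ˢ Set.Icc (0:ℝ) 1) : Set (ℝ × ℝ))),
      ‖fderiv ℝ (H ε).toFun p‖ ≤ ε ^ (-(N:ℝ)))

/-- `H` is a homotopy in `A` between the closed paths `γ` and `γ'`. -/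
def IsHomotopyBetween (A : Set (ℝ → ℂ)) (γ γ' : ℝ → PwC1Path)
    (H : ℝ → PwC1Homotopy) : Prop :=
  HomotopyModerate H ∧
  (∀ t : ℝ → ℝ, (∀ ε, t ε ∈ Set.Icc (0:ℝ) 1) →
    (Negligible fun ε => (H ε).toFun (t ε, 0) - (γ ε).toFun (t ε)) ∧
    (Negligible fun ε => (H ε).toFun (t ε, 1) - (γ' ε).toFun (t ε))) ∧
  (∀ s : ℝ → ℝ, (∀ ε, s ε ∈ Set.Icc (0:ℝ) 1) →
    Negligible fun ε => (H ε).toFun (0, s ε) - (H ε).toFun (1, s ε)) ∧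
  (∀ t s : ℝ → ℝ, (∀ ε, t ε ∈ Set.Icc (0:ℝ) 1) → (∀ ε, s ε ∈ Set.Icc (0:ℝ) 1) →
    IsReprOfPointOf A fun ε => (H ε).toFun (t ε, s ε))

/-!
(1) ⇒ (2) is evaluation at points. For (3) ⇒ (1), take for `v_ε` a smooth cutoff of `1 / u_ε`
that equals `1 / u_ε` wherever `|u_ε| ≥ ε^n / 2`. Every point of `A` lies within `ε^n` of `A_ε`,
so `u_ε v_ε = 1` near each of its representatives, and differentiating `v_ε' = -v_ε² u_ε'`
bounds the derivatives of `v_ε` recursively by those of `u_ε` and lower ones of `v_ε`.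
For (2) ⇒ (3), if (3) fails there are `ε_k → 0` and points `p_k` within `2 ε_k^k` of `A_{ε_k}`
with `|u_{ε_k}(p_k)| < ε_k^k`. Interleaving the `p_k` with a point of `A` gives, because
`(A_ε)` is sharply bounded, a point of `A` at which `u` has no inverse in `C̃`.
-/

open Topology Asymptotics
open scoped ContDiff

theorem evSmall_iff_eventually {P : ℝ → Prop} : EvSmall P ↔ ∀ᶠ ε in 𝓝[>] 0, P ε := by
  constructor
  · rintro ⟨ε₀, hε₀, -, hP⟩
    filter_upwards [Ioc_mem_nhdsGT hε₀] with ε hε using hP ε hε.1 hε.2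
  · intro h
    obtain ⟨b, hb, hbP⟩ := mem_nhdsGT_iff_exists_Ioo_subset.mp h
    have hb : 0 < b := hb
    refine ⟨min (b / 2) (1 / 2), by positivity, by linarith [min_le_right (b / 2) (1 / 2)],
      fun ε hε hεle => hbP ⟨hε, ?_⟩⟩
    linarith [min_le_left (b / 2) (1 / 2)]

theorem isLittleO_rpow_rpow_nhdsGT_zero {a b : ℝ} (hab : a < b) :
    (fun ε : ℝ => ε ^ b) =o[𝓝[>] 0] fun ε => ε ^ a := by
  have hlim : Tendsto (fun ε : ℝ => ε ^ (b - a)) (𝓝[>] 0) (𝓝 0) := by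
    simpa [zero_rpow (sub_pos.mpr hab).ne'] using
      ((continuousAt_rpow_const 0 (b - a) (Or.inr (sub_pos.mpr hab).le)).tendsto).mono_left
        nhdsWithin_le_nhds
  refine (((isLittleO_one_iff ℝ).mpr hlim).mul_isBigO (isBigO_refl (fun ε : ℝ => ε ^ a) _)).congr'
    ?_ (by simp)
  filter_upwards [self_mem_nhdsWithin] with ε hε
  rw [← rpow_add hε, sub_add_cancel]

theorem isBigO_rpow_rpow_nhdsGT_zero {a b : ℝ} (hab : a ≤ b) :
    (fun ε : ℝ => ε ^ b) =O[𝓝[>] 0] fun ε => ε ^ a := by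
  rcases hab.eq_or_lt with rfl | hlt
  · exact isBigO_refl _ _
  · exact (isLittleO_rpow_rpow_nhdsGT_zero hlt).isBigO

theorem eventually_norm_le_rpow_of_isBigO {E : Type*} [SeminormedAddGroup E] {u : ℝ → E}
    {a b : ℝ} (hab : b < a) (h : u =O[𝓝[>] 0] fun ε => ε ^ a) :
    ∀ᶠ ε in 𝓝[>] 0, ‖u ε‖ ≤ ε ^ b := by
  filter_upwards [(h.trans_isLittleO (isLittleO_rpow_rpow_nhdsGT_zero hab)).bound one_pos,
    self_mem_nhdsWithin] with ε hle hε
  rwa [one_mul, norm_of_nonneg (rpow_nonneg (le_of_lt hε) _)] at hle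

theorem isBigO_of_eventually_norm_le {E : Type*} [SeminormedAddGroup E] {u : ℝ → E} {a : ℝ}
    (h : ∀ᶠ ε in 𝓝[>] 0, ‖u ε‖ ≤ ε ^ a) : u =O[𝓝[>] 0] fun ε => ε ^ a := by
  refine IsBigO.of_bound' ?_
  filter_upwards [h, self_mem_nhdsWithin] with ε hle hε
  rwa [norm_of_nonneg (rpow_nonneg (le_of_lt hε) _)]

theorem moderate_iff_isBigO {E : Type*} [SeminormedAddGroup E] {u : ℝ → E} :
    Moderate u ↔ ∃ N : ℕ, u =O[𝓝[>] 0] fun ε => ε ^ (-(N : ℝ)) := by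
  simp only [Moderate, evSmall_iff_eventually]
  refine ⟨fun ⟨N, h⟩ => ⟨N, isBigO_of_eventually_norm_le h⟩, fun ⟨N, h⟩ => ⟨N + 1, ?_⟩⟩
  exact eventually_norm_le_rpow_of_isBigO (by push_cast; linarith) h

theorem negligible_iff_isBigO {E : Type*} [SeminormedAddGroup E] {u : ℝ → E} :
    Negligible u ↔ ∀ m : ℕ, u =O[𝓝[>] 0] fun ε => ε ^ (m : ℝ) := by
  simp only [Negligible, evSmall_iff_eventually]
  refine ⟨fun h m => isBigO_of_eventually_norm_le (h m), fun h m => ?_⟩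
  exact eventually_norm_le_rpow_of_isBigO (by push_cast; linarith) (h (m + 1))

section Moderate

variable {E : Type*} [SeminormedAddCommGroup E]

theorem moderate_const (c : E) : Moderate fun _ : ℝ => c :=
  moderate_iff_isBigO.mpr ⟨0, (isBigO_const_const c one_ne_zero _).congr_right (by simp)⟩

theorem Moderate.add {u v : ℝ → E} (hu : Moderate u) (hv : Moderate v) :
    Moderate fun ε => u ε + v ε := by
  obtain ⟨N, hN⟩ := moderate_iff_isBigO.mp hu
  obtain ⟨M, hM⟩ := moderate_iff_isBigO.mp hv
  refine moderate_iff_isBigO.mpr ⟨max N M, ?_⟩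
  have hle : ∀ K ≤ max N M, (fun ε : ℝ => ε ^ (-(K : ℝ))) =O[𝓝[>] 0]
      fun ε => ε ^ (-((max N M : ℕ) : ℝ)) :=
    fun K hK => isBigO_rpow_rpow_nhdsGT_zero (by simpa using hK)
  exact (hN.trans (hle N (le_max_left N M))).add (hM.trans (hle M (le_max_right N M)))

theorem Moderate.of_norm_le {u : ℝ → E} {g : ℝ → ℝ} (hg : Moderate g)
    (h : ∀ᶠ ε in 𝓝[>] 0, ‖u ε‖ ≤ g ε) : Moderate u := by
  obtain ⟨N, hN⟩ := moderate_iff_isBigO.mp hg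
  refine moderate_iff_isBigO.mpr ⟨N, (IsBigO.of_bound' ?_).trans hN⟩
  filter_upwards [h] with ε hε using hε.trans (le_norm_self _)

theorem Moderate.norm {u : ℝ → E} (hu : Moderate u) : Moderate fun ε => ‖u ε‖ := by
  simpa [Moderate] using hu

theorem Negligible.moderate {u : ℝ → E} (hu : Negligible u) : Moderate u :=
  moderate_iff_isBigO.mpr ⟨0, by simpa using negligible_iff_isBigO.mp hu 0⟩

theorem Negligible.add {u v : ℝ → E} (hu : Negligible u) (hv : Negligible v) :
    Negligible fun ε => u ε + v ε :=
  negligible_iff_isBigO.mpr fun m =>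
    (negligible_iff_isBigO.mp hu m).add (negligible_iff_isBigO.mp hv m)

theorem negligible_of_eventually_eq_zero {u : ℝ → E} (h : ∀ᶠ ε in 𝓝[>] 0, u ε = 0) :
    Negligible u :=
  negligible_iff_isBigO.mpr fun _ => IsBigO.of_bound' (by filter_upwards [h] with ε hε; simp [hε])

theorem Moderate.mul {R : Type*} [SeminormedRing R] {u v : ℝ → R} (hu : Moderate u)
    (hv : Moderate v) : Moderate fun ε => u ε * v ε := by
  obtain ⟨N, hN⟩ := moderate_iff_isBigO.mp hu
  obtain ⟨M, hM⟩ := moderate_iff_isBigO.mp hv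
  refine moderate_iff_isBigO.mpr ⟨N + M, (hN.mul hM).congr' .rfl ?_⟩
  filter_upwards [self_mem_nhdsWithin] with ε hε
  rw [← rpow_add hε]
  push_cast
  ring_nf

theorem Moderate.sum {ι : Type*} {s : Finset ι} {u : ι → ℝ → E}
    (hu : ∀ i ∈ s, Moderate (u i)) : Moderate fun ε => ∑ i ∈ s, u i ε := by
  classical
  induction s using Finset.induction_on with
  | empty => simpa using moderate_const (0 : E)
  | insert a s ha ih =>
    simp_rw [Finset.sum_insert ha]
    exact (hu a (s.mem_insert_self a)).add (ih fun i hi => hu i (Finset.mem_insert_of_mem hi))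

theorem moderate_rpow_neg (n : ℕ) : Moderate fun ε : ℝ => ε ^ (-(n : ℝ)) :=
  ⟨n, evSmall_iff_eventually.mpr (by
    filter_upwards [self_mem_nhdsWithin] with ε (hε : 0 < ε)
    rw [norm_of_nonneg (rpow_nonneg hε.le _)])⟩

theorem eqvNet_refl (x : ℝ → E) : EqvNet x x :=
  negligible_of_eventually_eq_zero (.of_forall fun ε => sub_self (x ε))

theorem EqvNet.trans {x y z : ℝ → E} (hxy : EqvNet x y) (hyz : EqvNet y z) : EqvNet x z := by
  simpa [EqvNet, Pi.add_def] using hxy.add hyz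

end Moderate

theorem exists_seq_tendsto_nhdsGT_zero_of_frequently {P : ℕ → ℝ → Prop}
    (h : ∀ k, ∃ᶠ ε in 𝓝[>] 0, P k ε) :
    ∃ e : ℕ → ℝ, Tendsto e atTop (𝓝[>] 0) ∧ ∀ k, 0 < e k ∧ P k (e k) := by
  have hex : ∀ k : ℕ, ∃ ε ∈ Ioo (0 : ℝ) (1 / (k + 1)), P k ε := fun k =>
    frequently_iff.mp (h k) (Ioo_mem_nhdsGT (by positivity))
  choose e he hP using hex
  refine ⟨e, tendsto_nhdsWithin_iff.mpr ⟨?_, .of_forall fun k => (he k).1⟩,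
    fun k => ⟨(he k).1, hP k⟩⟩
  exact tendsto_of_tendsto_of_tendsto_of_le_of_le tendsto_const_nhds
    tendsto_one_div_add_atTop_nhds_zero_nat (fun k => (he k).1.le) (fun k => (he k).2.le)

theorem eventually_forall_eq_imp_lt {e : ℕ → ℝ} (he : ∀ k, 0 < e k) (m : ℕ) :
    ∀ᶠ ε in 𝓝[>] 0, ∀ k, e k = ε → m < k := by
  have h : ∀ᶠ ε in 𝓝[>] (0 : ℝ), ∀ k ∈ Finset.range (m + 1), ε < e k :=
    (eventually_all_finset _).mpr fun k _ => nhdsWithin_le_nhds (Iio_mem_nhds (he k))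
  filter_upwards [h] with ε hε k hk
  by_contra hkm
  exact (hε k (Finset.mem_range.mpr (by omega))).ne hk.symm

section InternalSet

variable {E : Type*} [SeminormedAddCommGroup E] {Aε : ℝ → Set E}

theorem isReprOfPointOf_of_mem {A : Set (ℝ → E)} {x : ℝ → E} (hx : x ∈ A)
    (hmod : Moderate x) : IsReprOfPointOf A x :=
  ⟨hmod, x, hx, eqvNet_refl x⟩

theorem IsReprOfPointOf.exists_eqvNet_eventually_mem {x : ℝ → E}
    (hx : IsReprOfPointOf (InternalSet Aε) x) :
    ∃ y : ℝ → E, EqvNet x y ∧ ∀ᶠ ε in 𝓝[>] 0, y ε ∈ Aε ε := by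
  obtain ⟨-, a, ⟨-, y, hay, hy⟩, hxa⟩ := hx
  exact ⟨y, hxa.trans hay, evSmall_iff_eventually.mp hy⟩

theorem SharplyBddRep.moderate {y : ℝ → E} (hbd : SharplyBddRep Aε)
    (hy : ∀ᶠ ε in 𝓝[>] 0, y ε ∈ Aε ε) : Moderate y := by
  obtain ⟨M, hM⟩ := hbd
  refine ⟨M, evSmall_iff_eventually.mpr ?_⟩
  filter_upwards [evSmall_iff_eventually.mp hM, hy] with ε hM hy using hM _ hy

theorem IsReprOfPointOf.eventually_mem_cthickening {x : ℝ → E}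
    (hx : IsReprOfPointOf (InternalSet Aε) x) (n : ℕ) :
    ∀ᶠ ε in 𝓝[>] 0, x ε ∈ cthickening (ε ^ n) (Aε ε) := by
  obtain ⟨y, hxy, hy⟩ := hx.exists_eqvNet_eventually_mem
  filter_upwards [evSmall_iff_eventually.mp (hxy n), hy] with ε hε hyε
  exact mem_cthickening_of_dist_le _ _ _ _ hyε (by simpa [dist_eq_norm] using hε)

theorem exists_isReprOfPointOf_internalSet_interleave (hbd : SharplyBddRep Aε) {y₀ : ℝ → E}
    (hy₀ : ∀ᶠ ε in 𝓝[>] 0, y₀ ε ∈ Aε ε) {e : ℕ → ℝ} (he : ∀ k, 0 < e k) {p q : ℕ → E}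
    (hq : ∀ k, q k ∈ Aε (e k)) (C : ℝ) (hpq : ∀ k, ‖p k - q k‖ ≤ C * e k ^ k) :
    ∃ x : ℝ → E, IsReprOfPointOf (InternalSet Aε) x ∧ ∀ k, ∃ j, e j = e k ∧ x (e k) = p j := by
  classical
  set x := (range e).piecewise (fun ε => p (Function.invFun e ε)) y₀
  set y := (range e).piecewise (fun ε => q (Function.invFun e ε)) y₀
  have hmem : ∀ ε ∈ range e, e (Function.invFun e ε) = ε := fun ε hε => Function.invFun_eq hε
  have hy : ∀ᶠ ε in 𝓝[>] 0, y ε ∈ Aε ε := by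
    filter_upwards [hy₀] with ε hε
    by_cases hr : ε ∈ range e
    · simpa [y, hr, hmem ε hr] using hq (Function.invFun e ε)
    · simpa [y, hr] using hε
  have hxy : EqvNet x y := negligible_iff_isBigO.mpr fun m => by
    refine IsBigO.of_bound |C| ?_
    filter_upwards [eventually_forall_eq_imp_lt he m, Ioo_mem_nhdsGT one_pos] with ε hlt hε
    by_cases hr : ε ∈ range e
    · set j := Function.invFun e ε
      have hj : e j = ε := hmem ε hr
      calc ‖x ε - y ε‖ = ‖p j - q j‖ := by simp [x, y, hr, j]
        _ ≤ C * ε ^ j := hj ▸ hpq j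
        _ ≤ |C| * ε ^ m := mul_le_mul (le_abs_self C)
          (pow_le_pow_of_le_one hε.1.le hε.2.le (hlt j hj).le) (pow_nonneg hε.1.le j) (abs_nonneg C)
        _ = |C| * ‖ε ^ (m : ℝ)‖ := by
          rw [rpow_natCast, norm_of_nonneg (pow_nonneg hε.1.le m)]
    · simpa [x, y, hr] using by positivity
  have hxmod : Moderate x := by
    simpa using (hbd.moderate hy).add hxy.moderate
  refine ⟨x, isReprOfPointOf_of_mem ⟨hxmod, y, hxy, evSmall_iff_eventually.mpr hy⟩ hxmod,
    fun k => ⟨Function.invFun e (e k), hmem _ (mem_range_self k), ?_⟩⟩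
  simp [x]

end InternalSet

theorem lt_norm_mul_sub_one {R : Type*} [NormedRing R] [NormOneClass R] {a w : R} {ε : ℝ}
    {j N : ℕ} (hε : ε ∈ Ioo 0 (1 / 2)) (hNj : N < j) (ha : ‖a‖ < ε ^ j)
    (hw : ‖w‖ ≤ ε ^ (-(N : ℝ))) : ε < ‖a * w - 1‖ := by
  have hεN : 0 < ε ^ N := pow_pos hε.1 N
  have haw : ‖a * w‖ ≤ ε :=
    calc ‖a * w‖ ≤ ‖a‖ * ‖w‖ := norm_mul_le a w
      _ ≤ ε ^ (N + 1) * (ε ^ N)⁻¹ := by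
        rw [rpow_neg hε.1.le, rpow_natCast] at hw
        exact mul_le_mul (ha.le.trans (pow_le_pow_of_le_one hε.1.le (by linarith [hε.2]) hNj))
          hw (norm_nonneg w) (pow_nonneg hε.1.le _)
      _ = ε := by field_simp; ring
  have h1 := norm_sub_norm_le (1 : R) (a * w)
  rw [norm_one, norm_sub_rev] at h1
  linarith [hε.2]

def invCutoff (δ : ℝ) (w : ℂ) : ℂ := smoothTransition (2 * ‖w‖ ^ 2 / δ ^ 2 - 1) • w⁻¹

theorem invCutoff_eq_inv {δ : ℝ} (hδ : 0 < δ) {w : ℂ} (hw : δ ≤ ‖w‖) : invCutoff δ w = w⁻¹ := by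
  have h : 1 ≤ 2 * ‖w‖ ^ 2 / δ ^ 2 - 1 := by
    rw [le_sub_iff_add_le, le_div_iff₀ (by positivity)]
    nlinarith
  rw [invCutoff, smoothTransition.one_of_one_le h, one_smul]

theorem contDiff_invCutoff {δ : ℝ} (hδ : 0 < δ) : ContDiff ℝ ∞ (invCutoff δ) := by
  refine contDiff_iff_contDiffAt.mpr fun w => ?_
  rcases lt_or_ge (‖w‖ ^ 2) (δ ^ 2 / 2) with hsmall | hlarge
  · refine (contDiffAt_const (c := (0 : ℂ))).congr_of_eventuallyEq ?_
    filter_upwards [((continuous_norm.pow 2).tendsto w).eventually (gt_mem_nhds hsmall)] with z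
      (hz : ‖z‖ ^ 2 < δ ^ 2 / 2)
    have : 2 * ‖z‖ ^ 2 / δ ^ 2 - 1 ≤ 0 := by
      rw [sub_nonpos, div_le_one (by positivity)]
      linarith
    rw [invCutoff, smoothTransition.zero_of_nonpos this, zero_smul]
  · have hw : w ≠ 0 := by
      rintro rfl
      simp at hlarge
      nlinarith
    exact (smoothTransition.contDiff.comp
      ((contDiff_const.mul (contDiff_norm_sq ℝ)).div_const _ |>.sub contDiff_const)).contDiffAt.smul
      (contDiffAt_inv ℝ hw)

theorem mul_invCutoff_eq_one {δ : ℝ} (hδ : 0 < δ) {w : ℂ} (hw : δ ≤ ‖w‖) :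
    w * invCutoff δ w = 1 := by
  rw [invCutoff_eq_inv hδ hw, mul_inv_cancel₀ (norm_pos_iff.mp (hδ.trans_le hw))]

section Derivatives

variable {V : Type*} [NormedAddCommGroup V] [NormedSpace ℝ V]

theorem fderiv_eventuallyEq_of_mul_eq_one {f g : V → ℂ} {x : V} (hf : Differentiable ℝ f)
    (h : ∀ᶠ z in 𝓝 x, f z * g z = 1) :
    fderiv ℝ g =ᶠ[𝓝 x] fun z => -(g z * g z) • fderiv ℝ f z := by
  filter_upwards [h.eventually_nhds] with z hz
  have hfz : f z ≠ 0 := left_ne_zero_of_mul_eq_one hz.self_of_nhds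
  have hginv : g =ᶠ[𝓝 z] fun y => (f y)⁻¹ := hz.mono fun y hy => (eq_inv_of_mul_eq_one_right hy)
  rw [hginv.fderiv_eq,
    ((hasFDerivAt_inv' hfz).comp z (hf z).hasFDerivAt).fderiv (f := fun y => (f y)⁻¹),
    hginv.self_of_nhds]
  ext v
  simp [ContinuousLinearMap.mulLeftRight_apply]
  ring

theorem norm_iteratedFDeriv_succ_le_of_mul_eq_one {f g : V → ℂ} {x : V}
    (hf : ContDiff ℝ ∞ f) (hg : ContDiff ℝ ∞ g) (h : ∀ᶠ z in 𝓝 x, f z * g z = 1) (j : ℕ) :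
    ‖iteratedFDeriv ℝ (j + 1) g x‖ ≤ ∑ i ∈ Finset.range (j + 1),
      (j.choose i : ℝ) * ‖iteratedFDeriv ℝ i (fun z => g z * g z) x‖ *
        ‖iteratedFDeriv ℝ (j - i + 1) f x‖ := by
  have hneg (i : ℕ) : ‖iteratedFDeriv ℝ i (fun z => -(g z * g z)) x‖ =
      ‖iteratedFDeriv ℝ i (fun z => g z * g z) x‖ := by
    rw [show (fun z => -(g z * g z)) = -fun z => g z * g z from rfl, iteratedFDeriv_neg_apply,
      norm_neg]
  calc ‖iteratedFDeriv ℝ (j + 1) g x‖ = ‖iteratedFDeriv ℝ j (fderiv ℝ g) x‖ :=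
        norm_iteratedFDeriv_fderiv.symm
    _ = ‖iteratedFDeriv ℝ j (fun z => -(g z * g z) • fderiv ℝ f z) x‖ := by
        rw [((fderiv_eventuallyEq_of_mul_eq_one (hf.differentiable (by simp)) h).iteratedFDeriv
          ℝ j).eq_of_nhds]
    _ ≤ _ := norm_iteratedFDeriv_smul_le (hg.mul hg).neg (hf.fderiv_right (by simp)) x
        (by exact_mod_cast le_top)
    _ = _ := by simp_rw [hneg, norm_iteratedFDeriv_fderiv]

theorem moderate_iteratedFDeriv_mul {f g : ℝ → V → ℂ} (hf : SmoothNet f) (hg : SmoothNet g)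
    {x : ℝ → V} {n : ℕ} (hfm : ∀ i ≤ n, Moderate fun ε => iteratedFDeriv ℝ i (f ε) (x ε))
    (hgm : ∀ i ≤ n, Moderate fun ε => iteratedFDeriv ℝ i (g ε) (x ε)) :
    Moderate fun ε => iteratedFDeriv ℝ n (fun z => f ε z * g ε z) (x ε) := by
  have hbound : ∀ᶠ ε in 𝓝[>] 0, ‖iteratedFDeriv ℝ n (fun z => f ε z * g ε z) (x ε)‖ ≤
      ∑ i ∈ Finset.range (n + 1), (n.choose i : ℝ) * ‖iteratedFDeriv ℝ i (f ε) (x ε)‖ *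
        ‖iteratedFDeriv ℝ (n - i) (g ε) (x ε)‖ := by
    filter_upwards [Ioo_mem_nhdsGT one_pos] with ε hε
    exact norm_iteratedFDeriv_mul_le (hf ε hε.1 hε.2) (hg ε hε.1 hε.2) (x ε)
      (by exact_mod_cast le_top)
  refine Moderate.of_norm_le (Moderate.sum fun i hi => ?_) hbound
  have hi : i ≤ n := Nat.lt_succ_iff.mp (Finset.mem_range.mp hi)
  exact ((moderate_const _).mul (hfm i hi).norm).mul (hgm (n - i) (Nat.sub_le n i)).norm

end Derivatives

section Invertibility

variable {V : Type*} [NormedAddCommGroup V]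

-- Conditions (1), (2) and (3).
def IsGInvertible [NormedSpace ℝ V] (A : Set (ℝ → V)) (u : ℝ → V → ℂ) : Prop :=
  ∃ v : ℝ → V → ℂ, EMod A v ∧ GEq A (fun ε z => u ε z * v ε z) (fun _ _ => 1)

def IsPointwiseInvertible (A : Set (ℝ → V)) (u : ℝ → V → ℂ) : Prop :=
  ∀ x : ℝ → V, IsReprOfPointOf A x →
    ∃ w : ℝ → ℂ, Moderate w ∧ Negligible fun ε => u ε (x ε) * w ε - 1

def IsBoundedBelowOnThickening (Aε : ℝ → Set V) (u : ℝ → V → ℂ) : Prop :=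
  ∃ ε₀ : ℝ, 0 < ε₀ ∧ ε₀ < 1 ∧ ∃ n : ℕ, ∀ ε : ℝ, 0 < ε → ε ≤ ε₀ →
    ∀ x ∈ cthickening (ε ^ (n : ℝ)) (Aε ε), ε ^ (n : ℝ) ≤ ‖u ε x‖

theorem isBoundedBelowOnThickening_iff {Aε : ℝ → Set V} {u : ℝ → V → ℂ} :
    IsBoundedBelowOnThickening Aε u ↔ ∃ n : ℕ, ∀ᶠ ε in 𝓝[>] 0,
      ∀ x ∈ cthickening (ε ^ n) (Aε ε), ε ^ n ≤ ‖u ε x‖ := by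
  simp_rw [← evSmall_iff_eventually, EvSmall, IsBoundedBelowOnThickening, rpow_natCast]
  exact ⟨fun ⟨ε₀, h₀, h₁, n, h⟩ => ⟨n, ε₀, h₀, h₁, h⟩, fun ⟨n, ε₀, h₀, h₁, h⟩ => ⟨ε₀, h₀, h₁, n, h⟩⟩

theorem IsPointwiseInvertible.isBoundedBelowOnThickening {Aε : ℝ → Set V}
    (hne : (InternalSet Aε).Nonempty) (hbd : SharplyBddRep Aε) {u : ℝ → V → ℂ}
    (h : IsPointwiseInvertible (InternalSet Aε) u) : IsBoundedBelowOnThickening Aε u := by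
  rw [isBoundedBelowOnThickening_iff]
  by_contra hcon
  push Not at hcon
  have hbad : ∀ k : ℕ, ∃ᶠ ε in 𝓝[>] 0,
      ∃ p q, q ∈ Aε ε ∧ ‖p - q‖ ≤ 2 * ε ^ k ∧ ‖u ε p‖ < ε ^ k := fun k => by
    refine ((hcon k).and_eventually self_mem_nhdsWithin).mono fun ε ⟨⟨p, hp, hup⟩, hε⟩ => ?_
    have hεk : 0 < ε ^ k := pow_pos hε k
    obtain ⟨q, hq, hpq⟩ := mem_thickening_iff.mp
      (cthickening_subset_thickening' (δ₂ := 2 * ε ^ k) (by positivity) (by linarith) _ hp)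
    exact ⟨p, q, hq, (dist_eq_norm p q ▸ hpq).le, hup⟩
  obtain ⟨e, he, hek⟩ := exists_seq_tendsto_nhdsGT_zero_of_frequently hbad
  choose he₀ p q hq hpq hup using hek
  obtain ⟨-, -, y₀, -, hy₀⟩ := hne
  obtain ⟨x, hx, hxe⟩ := exists_isReprOfPointOf_internalSet_interleave hbd
    (evSmall_iff_eventually.mp hy₀) he₀ hq 2 hpq
  obtain ⟨w, ⟨N, hw⟩, hinv⟩ := h x hx
  have hsmall : ∀ᶠ ε in 𝓝[>] 0, ‖w ε‖ ≤ ε ^ (-(N : ℝ)) ∧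
      ‖u ε (x ε) * w ε - 1‖ ≤ ε ∧ (∀ k, e k = ε → N < k) ∧ ε ∈ Ioo 0 (1 / 2) := by
    filter_upwards [evSmall_iff_eventually.mp hw, evSmall_iff_eventually.mp (hinv 1),
      eventually_forall_eq_imp_lt he₀ N, Ioo_mem_nhdsGT (by norm_num : (0 : ℝ) < 1 / 2)]
      with ε h₁ h₂ h₃ h₄
    exact ⟨h₁, by simpa using h₂, h₃, h₄⟩
  obtain ⟨k, hk⟩ := (he.eventually hsmall).exists
  obtain ⟨j, hj, hxj⟩ := hxe k
  rw [← hj] at hk hxj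
  rw [hxj] at hk
  obtain ⟨hwj, hinvj, hidx, hεj⟩ := hk
  exact (lt_norm_mul_sub_one hεj (hidx j rfl) (hup j) hwj).not_ge hinvj

variable [NormedSpace ℝ V]

theorem IsGInvertible.isPointwiseInvertible {A : Set (ℝ → V)}
    {u : ℝ → V → ℂ} (h : IsGInvertible A u) : IsPointwiseInvertible A u := by
  obtain ⟨v, hv, huv⟩ := h
  intro x hx
  refine ⟨fun ε => v ε (x ε), ?_, ?_⟩
  · simpa [Moderate] using hv.2 0 x hx
  · simpa [Negligible] using huv.2 0 x hx

theorem EMod.of_eventually_mul_eq_one {A : Set (ℝ → V)} {u v : ℝ → V → ℂ} (hu : EMod A u)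
    (hv : SmoothNet v) {n : ℕ} (hloc : ∀ x, IsReprOfPointOf A x → ∀ᶠ ε in 𝓝[>] 0,
      ε ^ n ≤ ‖u ε (x ε)‖ ∧ ∀ᶠ z in 𝓝 (x ε), u ε z * v ε z = 1) :
    EMod A v := by
  refine ⟨hv, fun j x hx => ?_⟩
  induction j using Nat.strong_induction_on with
  | _ j IH =>
    cases j with
    | zero =>
      refine (moderate_rpow_neg n).of_norm_le ?_
      filter_upwards [hloc x hx, self_mem_nhdsWithin] with ε hloc (hε : 0 < ε)
      obtain ⟨hux, huv⟩ := hloc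
      rw [norm_iteratedFDeriv_zero, eq_inv_of_mul_eq_one_right huv.self_of_nhds, norm_inv,
        rpow_neg hε.le, rpow_natCast]
      exact inv_anti₀ (pow_pos hε n) hux
    | succ j =>
      have hbound : ∀ᶠ ε in 𝓝[>] 0, ‖iteratedFDeriv ℝ (j + 1) (v ε) (x ε)‖ ≤
          ∑ i ∈ Finset.range (j + 1), (j.choose i : ℝ) *
            ‖iteratedFDeriv ℝ i (fun z => v ε z * v ε z) (x ε)‖ *
              ‖iteratedFDeriv ℝ (j - i + 1) (u ε) (x ε)‖ := by
        filter_upwards [hloc x hx, Ioo_mem_nhdsGT one_pos] with ε hloc hε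
        exact norm_iteratedFDeriv_succ_le_of_mul_eq_one (hu.1 ε hε.1 hε.2) (hv ε hε.1 hε.2)
          hloc.2 j
      refine Moderate.of_norm_le (Moderate.sum fun i hi => ?_) hbound
      have hIH : ∀ l ≤ i, Moderate fun ε => iteratedFDeriv ℝ l (v ε) (x ε) := fun l hl =>
        IH l (by have := Finset.mem_range.mp hi; omega)
      exact ((moderate_const _).mul (moderate_iteratedFDeriv_mul hv hv hIH hIH).norm).mul
        (hu.2 _ x hx).norm

theorem IsBoundedBelowOnThickening.isGInvertible {Aε : ℝ → Set V} {u : ℝ → V → ℂ}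
    (hu : EMod (InternalSet Aε) u) (h : IsBoundedBelowOnThickening Aε u) :
    IsGInvertible (InternalSet Aε) u := by
  obtain ⟨n, hn⟩ := isBoundedBelowOnThickening_iff.mp h
  set v : ℝ → V → ℂ := fun ε z => invCutoff (ε ^ n / 2) (u ε z)
  have hv : SmoothNet v := fun ε h₀ h₁ => (contDiff_invCutoff (by positivity)).comp (hu.1 ε h₀ h₁)
  have hloc : ∀ x, IsReprOfPointOf (InternalSet Aε) x → ∀ᶠ ε in 𝓝[>] 0,
      ε ^ n ≤ ‖u ε (x ε)‖ ∧ ∀ᶠ z in 𝓝 (x ε), u ε z * v ε z = 1 := fun x hx => by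
    filter_upwards [hn, hx.eventually_mem_cthickening n, Ioo_mem_nhdsGT one_pos]
      with ε hnε hxε hε
    have hux := hnε _ hxε
    have hδ : 0 < ε ^ n / 2 := by have := hε.1; positivity
    refine ⟨hux, ?_⟩
    filter_upwards [((hu.1 ε hε.1 hε.2).continuous.norm.tendsto (x ε)).eventually
      (lt_mem_nhds (show ε ^ n / 2 < ‖u ε (x ε)‖ by linarith))] with z hz
    exact mul_invCutoff_eq_one hδ hz.le
  refine ⟨v, hu.of_eventually_mul_eq_one hv hloc, fun ε h₀ h₁ =>
    ((hu.1 ε h₀ h₁).mul (hv ε h₀ h₁)).sub contDiff_const, fun j x hx =>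
    negligible_of_eventually_eq_zero ?_⟩
  filter_upwards [hloc x hx] with ε hloc
  have hzero : (fun z => u ε z * v ε z - 1) =ᶠ[𝓝 (x ε)] fun _ => 0 :=
    hloc.2.mono fun z hz => sub_eq_zero.mpr hz
  change iteratedFDeriv ℝ j (fun z => u ε z * v ε z - 1) (x ε) = 0
  rw [(hzero.iteratedFDeriv ℝ j).eq_of_nhds]
  simp

end Invertibility

theorem invertibility_internal_sharplyBounded_general (d : ℕ)
    (A : Set (ℝ → EuclideanSpace ℝ (Fin d)))
    (Aε : ℝ → Set (EuclideanSpace ℝ (Fin d)))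
    (hA : A = InternalSet Aε) (hne : A.Nonempty)
    (hbd : SharplyBddRep Aε)
    (u : ℝ → EuclideanSpace ℝ (Fin d) → ℂ) (hu : EMod A u) :
    -- (1) ↔ (2)
    ((∃ v : ℝ → EuclideanSpace ℝ (Fin d) → ℂ, EMod A v ∧
        GEq A (fun ε z => u ε z * v ε z) (fun _ _ => 1)) ↔
      (∀ x : ℝ → EuclideanSpace ℝ (Fin d), IsReprOfPointOf A x →
        ∃ w : ℝ → ℂ, Moderate w ∧ Negligible fun ε => u ε (x ε) * w ε - 1)) ∧
    -- (1) ↔ (3)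
    ((∃ v : ℝ → EuclideanSpace ℝ (Fin d) → ℂ, EMod A v ∧
        GEq A (fun ε z => u ε z * v ε z) (fun _ _ => 1)) ↔
      (∃ ε₀ : ℝ, 0 < ε₀ ∧ ε₀ < 1 ∧ ∃ n : ℕ, ∀ ε : ℝ, 0 < ε → ε ≤ ε₀ →
        ∀ x ∈ Metric.cthickening (ε ^ (n : ℝ)) (Aε ε), ε ^ (n : ℝ) ≤ ‖u ε x‖)) := by
  subst hA
  have h12 : IsGInvertible (InternalSet Aε) u → IsPointwiseInvertible (InternalSet Aε) u :=
    IsGInvertible.isPointwiseInvertible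
  have h23 : IsPointwiseInvertible (InternalSet Aε) u → IsBoundedBelowOnThickening Aε u :=
    IsPointwiseInvertible.isBoundedBelowOnThickening hne hbd
  have h31 : IsBoundedBelowOnThickening Aε u → IsGInvertible (InternalSet Aε) u :=
    IsBoundedBelowOnThickening.isGInvertible hu
  exact ⟨⟨h12, fun h => h31 (h23 h)⟩, ⟨fun h => h23 (h12 h), h31⟩⟩

/-- Proposition 3.18: pointwise invertibility criterion on an internal sharply bounded set. -/
theorem invertibility_internal_sharplyBounded (d : ℕ)
    (A : Set (ℝ → EuclideanSpace ℝ (Fin d)))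
    (Aε : ℝ → Set (EuclideanSpace ℝ (Fin d)))
    (hA : A = InternalSet Aε) (hne : A.Nonempty)
    (hbdA : SharplyBddSet A) (hbd : SharplyBddRep Aε)
    (u : ℝ → EuclideanSpace ℝ (Fin d) → ℂ) (hu : EMod A u) :
    -- (1) ↔ (2)
    ((∃ v : ℝ → EuclideanSpace ℝ (Fin d) → ℂ, EMod A v ∧
        GEq A (fun ε z => u ε z * v ε z) (fun _ _ => 1)) ↔
      (∀ x : ℝ → EuclideanSpace ℝ (Fin d), IsReprOfPointOf A x →
        ∃ w : ℝ → ℂ, Moderate w ∧ Negligible fun ε => u ε (x ε) * w ε - 1)) ∧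
    -- (1) ↔ (3)
    ((∃ v : ℝ → EuclideanSpace ℝ (Fin d) → ℂ, EMod A v ∧
        GEq A (fun ε z => u ε z * v ε z) (fun _ _ => 1)) ↔
      (∃ ε₀ : ℝ, 0 < ε₀ ∧ ε₀ < 1 ∧ ∃ n : ℕ, ∀ ε : ℝ, 0 < ε → ε ≤ ε₀ →
        ∀ x ∈ Metric.cthickening (ε ^ (n : ℝ)) (Aε ε), ε ^ (n : ℝ) ≤ ‖u ε x‖)) :=
  invertibility_internal_sharplyBounded_general d A Aε hA hne hbd u hu

end
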